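/- Change of coordinates on the unipotent radical: assume char F ≠ 2. For an r×2m matrix X and an r×r matrix Y over F define Z = J_r Y^T + (1/2)(−1)^r X J'_{2m} X^T. Then: (i) J_r Y^T − Y J_r^T + (−1)^r X J'_{2m} X^T = 0 if and only if Z is symmetric; (ii) if Z is symmetric then Y = Z J_r + (1/2) X θ_{r,m}(X); (iii) for u_1 ∈ GL_r(F) and u_2 ∈ Sp_{2m}(F), replacing (X,Y) by (u_1 X u_2^{-1}, u_1 Y θ_r(u_1)^{-1}) replaces Z by u_1 Z u_1^T. -/
import Mathlib


open Matrix

namespace RS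

variable (F : Type*) [Field F]

/-- The matrix `J_k`: its `(i, k+1-i)` entry (1-indexed) is `(-1)^(i-1)`, i.e. in 0-indexed
terms the `(i,j)` entry is `(-1)^i` when `i + j = k - 1`, and all other entries are `0`. -/
def Jmat (k : ℕ) : Matrix (Fin k) (Fin k) F :=
  Matrix.of fun i j => if (i : ℕ) + (j : ℕ) = k - 1 then (-1 : F) ^ (i : ℕ) else 0

/-- A 2×2 block matrix with blocks of sizes `a, b` (rows) and `c, d` (columns), realized on
`Fin (a+b) × Fin (c+d)`. -/
def blk2 {a b c d : ℕ} (A : Matrix (Fin a) (Fin c) F) (B : Matrix (Fin a) (Fin d) F)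
    (C : Matrix (Fin b) (Fin c) F) (D : Matrix (Fin b) (Fin d) F) :
    Matrix (Fin (a + b)) (Fin (c + d)) F :=
  Matrix.of fun i j =>
    if hi : (i : ℕ) < a then
      if hj : (j : ℕ) < c then A ⟨(i : ℕ), hi⟩ ⟨(j : ℕ), hj⟩
      else B ⟨(i : ℕ), hi⟩ ⟨(j : ℕ) - c, by have := j.isLt; omega⟩
    else
      if hj : (j : ℕ) < c then C ⟨(i : ℕ) - a, by have := i.isLt; omega⟩ ⟨(j : ℕ), hj⟩
      else D ⟨(i : ℕ) - a, by have := i.isLt; omega⟩ ⟨(j : ℕ) - c, by have := j.isLt; omega⟩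

/-- A 3×3 block (square) matrix with blocks of sizes `a, b, c`, realized on `Fin (a+b+c)`. -/
def blk3 {a b c : ℕ}
    (A11 : Matrix (Fin a) (Fin a) F) (A12 : Matrix (Fin a) (Fin b) F)
    (A13 : Matrix (Fin a) (Fin c) F)
    (A21 : Matrix (Fin b) (Fin a) F) (A22 : Matrix (Fin b) (Fin b) F)
    (A23 : Matrix (Fin b) (Fin c) F)
    (A31 : Matrix (Fin c) (Fin a) F) (A32 : Matrix (Fin c) (Fin b) F)
    (A33 : Matrix (Fin c) (Fin c) F) :
    Matrix (Fin (a + b + c)) (Fin (a + b + c)) F :=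
  Matrix.of fun i j =>
    if hi1 : (i : ℕ) < a then
      if hj1 : (j : ℕ) < a then A11 ⟨(i : ℕ), hi1⟩ ⟨(j : ℕ), hj1⟩
      else if hj2 : (j : ℕ) < a + b then A12 ⟨(i : ℕ), hi1⟩ ⟨(j : ℕ) - a, by omega⟩
      else A13 ⟨(i : ℕ), hi1⟩ ⟨(j : ℕ) - (a + b), by have := j.isLt; omega⟩
    else if hi2 : (i : ℕ) < a + b then
      if hj1 : (j : ℕ) < a then A21 ⟨(i : ℕ) - a, by omega⟩ ⟨(j : ℕ), hj1⟩
      else if hj2 : (j : ℕ) < a + b then A22 ⟨(i : ℕ) - a, by omega⟩ ⟨(j : ℕ) - a, by omega⟩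
      else A23 ⟨(i : ℕ) - a, by omega⟩ ⟨(j : ℕ) - (a + b), by have := j.isLt; omega⟩
    else
      if hj1 : (j : ℕ) < a then A31 ⟨(i : ℕ) - (a + b), by have := i.isLt; omega⟩ ⟨(j : ℕ), hj1⟩
      else if hj2 : (j : ℕ) < a + b then
        A32 ⟨(i : ℕ) - (a + b), by have := i.isLt; omega⟩ ⟨(j : ℕ) - a, by omega⟩
      else A33 ⟨(i : ℕ) - (a + b), by have := i.isLt; omega⟩
        ⟨(j : ℕ) - (a + b), by have := j.isLt; omega⟩

/-- `J'_{2k}`, the `2k×2k` block matrix `[[0, J_k], [-J_kᵀ, 0]]`. -/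
def Jp (k : ℕ) : Matrix (Fin (k + k)) (Fin (k + k)) F :=
  blk2 F 0 (Jmat F k) (-(Jmat F k)ᵀ) 0


lemma Jmat_mul_transpose (k : ℕ) : Jmat F k * (Jmat F k)ᵀ = 1 := by
  ext i j
  have hik : (i : ℕ) < k := i.isLt
  have hjk : (j : ℕ) < k := j.isLt
  rw [Matrix.mul_apply]
  rw [Finset.sum_eq_single (⟨k - 1 - (i : ℕ), by omega⟩ : Fin k)]
  · simp only [Jmat, Matrix.of_apply, Matrix.transpose_apply]
    rw [if_pos (show (i : ℕ) + (k - 1 - (i : ℕ)) = k - 1 by omega)]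
    by_cases h : i = j
    · subst h
      rw [if_pos (show (i : ℕ) + (k - 1 - (i : ℕ)) = k - 1 by omega), Matrix.one_apply_eq,
        ← pow_add, ← two_mul, pow_mul, neg_one_sq, one_pow]
    · have h' : (j : ℕ) ≠ (i : ℕ) := fun hh => h (Fin.ext hh.symm)
      rw [if_neg (show ¬((j : ℕ) + (k - 1 - (i : ℕ)) = k - 1) by omega), mul_zero,
        Matrix.one_apply_ne h]
  · intro l _ hl
    simp only [Jmat, Matrix.of_apply, Matrix.transpose_apply]
    have hl' : (l : ℕ) ≠ k - 1 - (i : ℕ) := fun hh => hl (Fin.ext (by simpa using hh))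
    rw [if_neg (by omega), zero_mul]
  · intro hmem; exact absurd (Finset.mem_univ _) hmem

lemma Jmat_transpose_mul (k : ℕ) : (Jmat F k)ᵀ * Jmat F k = 1 :=
  mul_eq_one_comm.mp (Jmat_mul_transpose F k)

lemma Jmat_transpose (k : ℕ) : (Jmat F k)ᵀ = ((-1 : F) ^ (k - 1)) • Jmat F k := by
  ext i j
  have hik : (i : ℕ) < k := i.isLt
  have hjk : (j : ℕ) < k := j.isLt
  simp only [Jmat, Matrix.of_apply, Matrix.transpose_apply, Matrix.smul_apply, smul_ite,
    smul_eq_mul, mul_zero]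
  by_cases h : (i : ℕ) + (j : ℕ) = k - 1
  · rw [if_pos (by omega), if_pos h]
    have : k - 1 + (i : ℕ) = (j : ℕ) + 2 * (i : ℕ) := by omega
    rw [← pow_add, this, pow_add, pow_mul, neg_one_sq, one_pow, mul_one]
  · rw [if_neg (show ¬((j : ℕ) + (i : ℕ) = k - 1) by omega), if_neg h, mul_zero]

lemma Jmat_mul_self (k : ℕ) : Jmat F k * Jmat F k = ((-1 : F) ^ (k - 1)) • 1 := by
  have h1 := Jmat_mul_transpose F k
  rw [Jmat_transpose, Matrix.mul_smul] at h1
  have h2 : ((-1 : F) ^ (k - 1)) • (((-1 : F) ^ (k - 1)) • (Jmat F k * Jmat F k))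
      = ((-1 : F) ^ (k - 1)) • (1 : Matrix (Fin k) (Fin k) F) := by rw [h1]
  rwa [smul_smul, ← pow_add, ← two_mul, pow_mul, neg_one_sq, one_pow, one_smul] at h2

lemma Jmat_inv (k : ℕ) : (Jmat F k)⁻¹ = (Jmat F k)ᵀ :=
  Matrix.inv_eq_right_inv (Jmat_mul_transpose F k)

lemma blk2_submatrix {a b c d : ℕ} (A : Matrix (Fin a) (Fin c) F) (B : Matrix (Fin a) (Fin d) F)
    (C : Matrix (Fin b) (Fin c) F) (D : Matrix (Fin b) (Fin d) F) :
    blk2 F A B C D = (Matrix.fromBlocks A B C D).submatrix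
      (finSumFinEquiv (m := a) (n := b)).symm (finSumFinEquiv (m := c) (n := d)).symm := by
  ext i j
  obtain ⟨p, rfl⟩ := (finSumFinEquiv (m := a) (n := b)).surjective i
  obtain ⟨q, rfl⟩ := (finSumFinEquiv (m := c) (n := d)).surjective j
  simp only [Matrix.submatrix_apply, Equiv.symm_apply_apply]
  cases p with
  | inl x =>
    cases q with
    | inl y =>
      simp [blk2, Matrix.fromBlocks, finSumFinEquiv_apply_left, x.isLt, y.isLt]
    | inr y =>
      simp only [blk2, Matrix.fromBlocks, finSumFinEquiv_apply_left,
        finSumFinEquiv_apply_right, Matrix.of_apply, Fin.coe_castAdd, Fin.coe_natAdd]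
      rw [dif_pos x.isLt, dif_neg (by omega)]
      simp only [Sum.elim_inl, Sum.elim_inr]
      congr 1 <;> first | rfl | exact Fin.ext (by simp) | exact Fin.ext (by omega)
  | inr x =>
    cases q with
    | inl y =>
      simp only [blk2, Matrix.fromBlocks, finSumFinEquiv_apply_left,
        finSumFinEquiv_apply_right, Matrix.of_apply, Fin.coe_castAdd, Fin.coe_natAdd]
      rw [dif_neg (by omega), dif_pos y.isLt]
      simp only [Sum.elim_inl, Sum.elim_inr]
      congr 1 <;> first | rfl | exact Fin.ext (by simp) | exact Fin.ext (by omega)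
    | inr y =>
      simp only [blk2, Matrix.fromBlocks, finSumFinEquiv_apply_right, Matrix.of_apply,
        Fin.coe_natAdd]
      rw [dif_neg (by omega), dif_neg (by omega)]
      simp only [Sum.elim_inr]
      congr 1 <;> first | rfl | exact Fin.ext (by simp) | exact Fin.ext (by omega)

lemma Jp_transpose (m : ℕ) : (Jp F m)ᵀ = -(Jp F m) := by
  rw [Jp, blk2_submatrix, Matrix.transpose_submatrix, Matrix.fromBlocks_transpose]
  rw [show (Matrix.fromBlocks (0 : Matrix (Fin m) (Fin m) F)ᵀ (-(Jmat F m)ᵀ)ᵀ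
      (Jmat F m)ᵀ (0 : Matrix (Fin m) (Fin m) F)ᵀ)
      = -(Matrix.fromBlocks 0 (Jmat F m) (-(Jmat F m)ᵀ) 0) by
    simp [Matrix.fromBlocks_neg]]
  rfl

lemma Jp_mul_self (m : ℕ) : Jp F m * Jp F m = -1 := by
  rw [Jp, blk2_submatrix, Matrix.submatrix_mul_equiv, Matrix.fromBlocks_multiply]
  simp only [Matrix.mul_zero, Matrix.zero_mul, zero_add, add_zero, Matrix.mul_neg,
    Jmat_mul_transpose, Matrix.neg_mul, Jmat_transpose_mul, neg_zero]
  rw [show (Matrix.fromBlocks (-(1 : Matrix (Fin m) (Fin m) F)) 0 0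
      (-(1 : Matrix (Fin m) (Fin m) F))) = -(1 : Matrix (Fin m ⊕ Fin m) (Fin m ⊕ Fin m) F) by
    simp [← Matrix.fromBlocks_one, Matrix.fromBlocks_neg]]
  simp [Matrix.submatrix_neg, Matrix.submatrix_one_equiv]

/-- `Sp_{2N}(F) = {h ∈ GL_{2N}(F) : hᵀ J'_{2N} h = J'_{2N}}`. -/
def Sp (N : ℕ) : Set (Matrix (Fin (N + N)) (Fin (N + N)) F) :=
  {h | IsUnit h ∧ hᵀ * Jp F N * h = Jp F N}

/-- `θ_r(g) = J_r (g⁻¹)ᵀ J_r⁻¹`. -/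
noncomputable def theta (r : ℕ) (g : Matrix (Fin r) (Fin r) F) : Matrix (Fin r) (Fin r) F :=
  Jmat F r * (g⁻¹)ᵀ * (Jmat F r)⁻¹

/-- `θ_{r,m}(X) = (-1)^r J'_{2m} Xᵀ J_r`. -/
def thetaRM (r m : ℕ) (X : Matrix (Fin r) (Fin (m + m)) F) : Matrix (Fin (m + m)) (Fin r) F :=
  (-1 : F) ^ r • (Jp F m * Xᵀ * Jmat F r)

/-- `n(X,Y) = [[I_r, X, Y], [0, I_{2m}, θ_{r,m}(X)], [0, 0, I_r]]` (block sizes `r, 2m, r`). -/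
def nMat (r m : ℕ) (X : Matrix (Fin r) (Fin (m + m)) F) (Y : Matrix (Fin r) (Fin r) F) :
    Matrix (Fin (r + (m + m) + r)) (Fin (r + (m + m) + r)) F :=
  blk3 F 1 X Y 0 1 (thetaRM F r m X) 0 0 1

/-- `n̄(X,Y) = [[I_r, 0, 0], [(-1)^r J'_{2m} Xᵀ J_r, I_{2m}, 0], [(-1)^r Y, (-1)^r X, I_r]]`. -/
def nbarMat (r m : ℕ) (X : Matrix (Fin r) (Fin (m + m)) F) (Y : Matrix (Fin r) (Fin r) F) :
    Matrix (Fin (r + (m + m) + r)) (Fin (r + (m + m) + r)) F :=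
  blk3 F 1 0 0 ((-1 : F) ^ r • (Jp F m * Xᵀ * Jmat F r)) 1 0
    ((-1 : F) ^ r • Y) ((-1 : F) ^ r • X) 1

/-- `ẇ_0 = [[0, 0, I_r], [0, I_{2m}, 0], [(-1)^r I_r, 0, 0]]`. -/
def w0 (r m : ℕ) : Matrix (Fin (r + (m + m) + r)) (Fin (r + (m + m) + r)) F :=
  blk3 F 0 0 1 0 1 0 ((-1 : F) ^ r • (1 : Matrix (Fin r) (Fin r) F)) 0 0

/-- `S(X,Y) = I_{2m} - J'_{2m} Xᵀ (Y⁻¹)ᵀ J_r X`. -/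
noncomputable def Smat (r m : ℕ) (X : Matrix (Fin r) (Fin (m + m)) F) (Y : Matrix (Fin r) (Fin r) F) :
    Matrix (Fin (m + m)) (Fin (m + m)) F :=
  1 - Jp F m * Xᵀ * (Y⁻¹)ᵀ * Jmat F r * X

/-- The block diagonal matrix `diag(m₁, m₂, θ_r(m₁))`. -/
noncomputable def levi (r m : ℕ) (m1 : Matrix (Fin r) (Fin r) F)
    (m2 : Matrix (Fin (m + m)) (Fin (m + m)) F) :
    Matrix (Fin (r + (m + m) + r)) (Fin (r + (m + m) + r)) F :=
  blk3 F m1 0 0 0 m2 0 0 0 (theta F r m1)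

/-- `m(X,Y) = diag(θ_r(Y), S(X,Y)⁻¹, Y)`. -/
noncomputable def mMat (r m : ℕ) (X : Matrix (Fin r) (Fin (m + m)) F) (Y : Matrix (Fin r) (Fin r) F) :
    Matrix (Fin (r + (m + m) + r)) (Fin (r + (m + m) + r)) F :=
  blk3 F (theta F r Y) 0 0 0 (Smat F r m X Y)⁻¹ 0 0 0 Y

/-- `α^∨(t) = diag(t·I_r, I_{2m}, t⁻¹·I_r)`. -/
def coroot (r m : ℕ) (t : Fˣ) :
    Matrix (Fin (r + (m + m) + r)) (Fin (r + (m + m) + r)) F :=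
  blk3 F ((t : F) • (1 : Matrix (Fin r) (Fin r) F)) 0 0 0 1 0 0 0
    (((t⁻¹ : Fˣ) : F) • (1 : Matrix (Fin r) (Fin r) F))

/-- Transport of a `2n×2n` matrix written with block sizes `(r, 2m, r)` to the canonical
index type `Fin ((r+m)+(r+m))` (where `n = r + m`), along the obvious cast. -/
def toSp (r m : ℕ) (M : Matrix (Fin (r + (m + m) + r)) (Fin (r + (m + m) + r)) F) :
    Matrix (Fin ((r + m) + (r + m))) (Fin ((r + m) + (r + m))) F :=
  Matrix.reindex (finCongr (by omega)) (finCongr (by omega)) M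

/-- Upper-triangular unipotent matrices. -/
def UTU {k : ℕ} (u : Matrix (Fin k) (Fin k) F) : Prop :=
  (∀ i, u i i = 1) ∧ ∀ i j : Fin k, (j : ℕ) < (i : ℕ) → u i j = 0

/-- A row vector as a `1 × k` matrix. -/
def rowVec {k : ℕ} (v : Fin k → F) : Matrix (Fin 1) (Fin k) F := Matrix.of fun _ j => v j

/-- A column vector as a `k × 1` matrix. -/
def colVec {k : ℕ} (v : Fin k → F) : Matrix (Fin k) (Fin 1) F := Matrix.of fun i _ => v i

/-- A scalar as a `1 × 1` matrix. -/
def scMat (x : F) : Matrix (Fin 1) (Fin 1) F := Matrix.of fun _ _ => x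

/-- `Y_i`: the lower-left `i×i` corner submatrix of `Y` (rows `r-i+1,…,r`, columns `1,…,i`,
1-indexed). -/
def llCorner (r : ℕ) (Y : Matrix (Fin r) (Fin r) F) (i : ℕ) (h : i ≤ r) :
    Matrix (Fin i) (Fin i) F :=
  Matrix.of fun a b =>
    Y ⟨r - i + (a : ℕ), by have := a.isLt; omega⟩ ⟨(b : ℕ), by have := b.isLt; omega⟩

/-- `Y^{(r-1)}`: the upper-right `(r-1)×(r-1)` corner submatrix of `Y` (rows `1,…,r-1`,
columns `2,…,r`, 1-indexed). -/
def urCorner (r : ℕ) (Y : Matrix (Fin r) (Fin r) F) :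
    Matrix (Fin (r - 1)) (Fin (r - 1)) F :=
  Matrix.of fun a b =>
    Y ⟨(a : ℕ), by have := a.isLt; omega⟩ ⟨(b : ℕ) + 1, by have := b.isLt; omega⟩

/-- `J₀`: the central `(2m-2)×(2m-2)` submatrix of `J'_{2m}` (rows and columns `2,…,2m-1`). -/
def J0 (m : ℕ) : Matrix (Fin (m + m - 2)) (Fin (m + m - 2)) F :=
  Matrix.of fun i j =>
    Jp F m ⟨(i : ℕ) + 1, by have := i.isLt; omega⟩ ⟨(j : ℕ) + 1, by have := j.isLt; omega⟩

/-- `diag(t₁,…,t_n, t_n⁻¹,…,t₁⁻¹)` (with `n = r + m`), realized on the index type with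
block sizes `(r, 2m, r)`. -/
def torus (r m : ℕ) (t : Fin (r + m) → Fˣ) :
    Matrix (Fin (r + (m + m) + r)) (Fin (r + (m + m) + r)) F :=
  Matrix.diagonal fun i =>
    if h : (i : ℕ) < r + m then ((t ⟨(i : ℕ), h⟩ : Fˣ) : F)
    else (((t ⟨r + (m + m) + r - 1 - (i : ℕ), by have := i.isLt; omega⟩)⁻¹ : Fˣ) : F)

/-- `Y_{i,j}`: the `(j-1)×(j-1)` submatrix of `Y` on the rows `{r-j+1,…,r} \ {r-i+1}` and the
columns `1,…,j-1` (all 1-indexed). -/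
def subDelRow (r : ℕ) (Y : Matrix (Fin r) (Fin r) F) (i j : ℕ)
    (hi : 1 ≤ i) (hij : i < j) (hj : j ≤ r) : Matrix (Fin (j - 1)) (Fin (j - 1)) F :=
  Matrix.of fun a b =>
    Y (if h : r - j + (a : ℕ) < r - i then
          (⟨r - j + (a : ℕ), by have := a.isLt; omega⟩ : Fin r)
        else (⟨r - j + (a : ℕ) + 1, by have := a.isLt; omega⟩ : Fin r))
      ⟨(b : ℕ), by have := b.isLt; omega⟩

/-- `Y'_{i,j}`: the `(r-i)×(r-i)` submatrix of `Y` on the rows `i+1,…,r` and the columns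
`{1,…,r-i+1} \ {r-j+1}` (all 1-indexed). -/
def subDelCol (r : ℕ) (Y : Matrix (Fin r) (Fin r) F) (i j : ℕ)
    (hi : 1 ≤ i) (hij : i < j) (hj : j ≤ r) : Matrix (Fin (r - i)) (Fin (r - i)) F :=
  Matrix.of fun a b =>
    Y ⟨i + (a : ℕ), by have := a.isLt; omega⟩
      (if h : (b : ℕ) < r - j then (⟨(b : ℕ), by have := b.isLt; omega⟩ : Fin r)
        else (⟨(b : ℕ) + 1, by have := b.isLt; omega⟩ : Fin r))


lemma sp_conj_inv (m : ℕ) (u : Matrix (Fin (m + m)) (Fin (m + m)) F) (hu : IsUnit u)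
    (h : uᵀ * Jp F m * u = Jp F m) : u⁻¹ * Jp F m * (u⁻¹)ᵀ = Jp F m := by
  have hJinv : (Jp F m)⁻¹ = -(Jp F m) :=
    Matrix.inv_eq_right_inv (by rw [Matrix.mul_neg, Jp_mul_self, neg_neg])
  have hinv := congrArg (fun M => M⁻¹) h
  rw [Matrix.mul_inv_rev, Matrix.mul_inv_rev, hJinv] at hinv
  rw [Matrix.transpose_nonsing_inv]
  simp only [Matrix.mul_neg, Matrix.neg_mul] at hinv
  rw [Matrix.mul_assoc]
  exact neg_inj.mp hinv

lemma theta_inv (r : ℕ) (u : Matrix (Fin r) (Fin r) F) (hu : IsUnit u) :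
    (theta F r u)⁻¹ = Jmat F r * uᵀ * (Jmat F r)ᵀ := by
  have hd : IsUnit u.det := (Matrix.isUnit_iff_isUnit_det u).mp hu
  apply Matrix.inv_eq_right_inv
  rw [theta, Jmat_inv]
  have e1 : (Jmat F r)ᵀ * (Jmat F r * (uᵀ * (Jmat F r)ᵀ)) = uᵀ * (Jmat F r)ᵀ := by
    rw [← Matrix.mul_assoc, Jmat_transpose_mul, Matrix.one_mul]
  have e2 : (u⁻¹)ᵀ * (uᵀ * (Jmat F r)ᵀ) = (Jmat F r)ᵀ := by
    rw [← Matrix.mul_assoc, ← Matrix.transpose_mul, Matrix.mul_nonsing_inv u hd,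
      Matrix.transpose_one, Matrix.one_mul]
  simp only [Matrix.mul_assoc]
  rw [e1, e2]
  exact Jmat_mul_transpose F r

/-- Change of coordinates `(X,Y) ↦ (X,Z)` on the unipotent radical. -/
theorem Z_coordinates (r m : ℕ) (hr : 1 ≤ r) (hm : 1 ≤ m) (h2 : (2 : F) ≠ 0)
    (X : Matrix (Fin r) (Fin (m + m)) F) (Y : Matrix (Fin r) (Fin r) F)
    (Z : Matrix (Fin r) (Fin r) F)
    (hZ : Z = Jmat F r * Yᵀ + ((2 : F)⁻¹ * (-1 : F) ^ r) • (X * Jp F m * Xᵀ)) :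
    ((Jmat F r * Yᵀ - Y * (Jmat F r)ᵀ + (-1 : F) ^ r • (X * Jp F m * Xᵀ) = 0) ↔ Zᵀ = Z) ∧
    (Zᵀ = Z → Y = Z * Jmat F r + (2 : F)⁻¹ • (X * thetaRM F r m X)) ∧
    (∀ (u1 : Matrix (Fin r) (Fin r) F) (u2 : Matrix (Fin (m + m)) (Fin (m + m)) F),
      IsUnit u1 → u2 ∈ Sp F m →
      Jmat F r * (u1 * Y * (theta F r u1)⁻¹)ᵀ +
          ((2 : F)⁻¹ * (-1 : F) ^ r) • ((u1 * X * u2⁻¹) * Jp F m * (u1 * X * u2⁻¹)ᵀ) =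
        u1 * Z * u1ᵀ) := by
  have hW : (X * Jp F m * Xᵀ)ᵀ = -(X * Jp F m * Xᵀ) := by
    have e : (X * Jp F m * Xᵀ)ᵀ = X * (Jp F m)ᵀ * Xᵀ := by
      rw [Matrix.transpose_mul, Matrix.transpose_mul, Matrix.transpose_transpose,
        ← Matrix.mul_assoc]
    rw [e, Jp_transpose, Matrix.mul_neg, Matrix.neg_mul]
  have hZt : Zᵀ = Y * (Jmat F r)ᵀ - ((2 : F)⁻¹ * (-1 : F) ^ r) • (X * Jp F m * Xᵀ) := by
    rw [hZ, Matrix.transpose_add, Matrix.transpose_smul, hW, Matrix.transpose_mul,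
      Matrix.transpose_transpose, smul_neg, ← sub_eq_add_neg]
  have hc : ((2 : F)⁻¹ * (-1 : F) ^ r) + ((2 : F)⁻¹ * (-1 : F) ^ r) = (-1 : F) ^ r := by
    field_simp
    ring
  have key : Jmat F r * Yᵀ - Y * (Jmat F r)ᵀ + ((-1 : F) ^ r) • (X * Jp F m * Xᵀ)
      = Z - Zᵀ := by
    rw [hZt, hZ, ← hc, add_smul]
    match_scalars <;> field_simp <;> ring
  refine ⟨?_, ?_, ?_⟩
  · rw [key, sub_eq_zero]
    exact ⟨fun h => h.symm, fun h => h.symm⟩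
  · intro hsym
    have hZ2 : Z = Y * (Jmat F r)ᵀ - ((2 : F)⁻¹ * (-1 : F) ^ r) • (X * Jp F m * Xᵀ) := by
      rw [← hsym, hZt]
    have hXt : X * thetaRM F r m X = ((-1 : F) ^ r) • (X * Jp F m * Xᵀ * Jmat F r) := by
      rw [thetaRM, Matrix.mul_smul]
      congr 1
      simp only [Matrix.mul_assoc]
    rw [hZ2, hXt, Matrix.sub_mul, Matrix.smul_mul, smul_smul,
      Matrix.mul_assoc Y, Jmat_transpose_mul, Matrix.mul_one]
    rw [sub_add_cancel]
  · intro u1 u2 hu1 hu2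
    obtain ⟨hu2u, hu2e⟩ := hu2
    have hsp := sp_conj_inv F m u2 hu2u hu2e
    have hXpart : (u1 * X * u2⁻¹) * Jp F m * (u1 * X * u2⁻¹)ᵀ
        = u1 * (X * Jp F m * Xᵀ) * u1ᵀ := by
      rw [Matrix.transpose_mul, Matrix.transpose_mul]
      have e : u2⁻¹ * (Jp F m * ((u2⁻¹)ᵀ * (Xᵀ * u1ᵀ)))
          = Jp F m * (Xᵀ * u1ᵀ) := by
        have e2 : u2⁻¹ * (Jp F m * ((u2⁻¹)ᵀ * (Xᵀ * u1ᵀ)))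
            = (u2⁻¹ * Jp F m * (u2⁻¹)ᵀ) * (Xᵀ * u1ᵀ) := by
          simp only [Matrix.mul_assoc]
        rw [e2, hsp]
      simp only [Matrix.mul_assoc]
      rw [e]
    have hYpart : Jmat F r * (u1 * Y * (theta F r u1)⁻¹)ᵀ
        = u1 * (Jmat F r * Yᵀ) * u1ᵀ := by
      rw [theta_inv F r u1 hu1]
      simp only [Matrix.transpose_mul, Matrix.transpose_transpose, Matrix.mul_assoc]
      rw [Jmat_transpose F r]
      rw [← Matrix.mul_assoc (Jmat F r) (Jmat F r), Jmat_mul_self]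
      simp only [Matrix.smul_mul, Matrix.mul_smul, Matrix.one_mul, smul_smul]
      rw [← pow_add, ← two_mul, pow_mul, neg_one_sq, one_pow, one_smul]
    rw [hYpart, hXpart, hZ, Matrix.mul_add, Matrix.add_mul, Matrix.mul_smul, Matrix.smul_mul]

end RS
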